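/- Let E_A be a primitive quantum channel on M_D(ℂ) and suppose A_1|φ⟩ = μ|φ⟩ with μ ≠ 0. Then H_{D−1}(A,φ) = ℂ^D, i.e., the vectors A_{k_1}···A_{k_{D−1}}|φ⟩ span ℂ^D. -/
import Mathlib


open Matrix
open scoped ComplexOrder

variable {D : ℕ} {ι : Type*} [Fintype ι]

/-- The completely positive map with Kraus operators `A k`. -/
noncomputable def krausMap (A : ι → Matrix (Fin D) (Fin D) ℂ)
    (X : Matrix (Fin D) (Fin D) ℂ) : Matrix (Fin D) (Fin D) ℂ :=
  ∑ k, A k * X * (A k)ᴴ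

/-- The product `A_{w 0} * A_{w 1} * ⋯ * A_{w (n-1)}` of Kraus operators along a word `w`. -/
noncomputable def wordProd (A : ι → Matrix (Fin D) (Fin D) ℂ) {n : ℕ} (w : Fin n → ι) :
    Matrix (Fin D) (Fin D) ℂ :=
  (List.ofFn fun i => A (w i)).prod

/-- `S_n(A)`: the span of all products of exactly `n` Kraus operators. -/
noncomputable def krausSpan (A : ι → Matrix (Fin D) (Fin D) ℂ) (n : ℕ) :
    Submodule ℂ (Matrix (Fin D) (Fin D) ℂ) :=
  Submodule.span ℂ {M | ∃ w : Fin n → ι, M = wordProd A w}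

/-- `H_n(A,φ) = S_n(A)|φ⟩`. -/
noncomputable def krausVecSpan (A : ι → Matrix (Fin D) (Fin D) ℂ) (n : ℕ)
    (φ : Fin D → ℂ) : Submodule ℂ (Fin D → ℂ) :=
  Submodule.span ℂ {v | ∃ w : Fin n → ι, v = wordProd A w *ᵥ φ}

/-- A quantum channel is primitive if some power maps every pure state to a
positive definite (full-rank) operator. -/
def Primitive (A : ι → Matrix (Fin D) (Fin D) ℂ) : Prop :=
  ∃ n, ∀ φ : Fin D → ℂ, φ ≠ 0 →
    ((krausMap A)^[n] (vecMulVec φ (star φ))).PosDef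

/-- `q(E_A)`: the quantum index of primitivity. -/
noncomputable def qIndex (A : ι → Matrix (Fin D) (Fin D) ℂ) : ℕ :=
  sInf {n | ∀ φ : Fin D → ℂ, φ ≠ 0 →
    ((krausMap A)^[n] (vecMulVec φ (star φ))).PosDef}

/-- `i(A)`: the minimal `n` with `S_n(A) = M_D`. -/
noncomputable def iIndex (A : ι → Matrix (Fin D) (Fin D) ℂ) : ℕ :=
  sInf {n | krausSpan A n = ⊤}

/-- Trace preservation, `∑ k, A_k† A_k = 1`. -/
def TracePreserving (A : ι → Matrix (Fin D) (Fin D) ℂ) : Prop :=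
  ∑ k, (A k)ᴴ * A k = 1

set_option linter.unusedSectionVars false

lemma wordProd_cons (A : ι → Matrix (Fin D) (Fin D) ℂ) {n : ℕ} (j : ι) (w : Fin n → ι) :
    wordProd A (Fin.cons j w) = A j * wordProd A (w : Fin n → ι) := by
  simp [wordProd, List.ofFn_succ]

lemma wordProd_snoc (A : ι → Matrix (Fin D) (Fin D) ℂ) {n : ℕ} (w : Fin n → ι) (j : ι) :
    wordProd A (Fin.snoc w j) = wordProd A w * A j := by
  rw [wordProd, List.ofFn_succ', List.concat_eq_append, List.prod_append]
  simp [wordProd]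

lemma sum_mulVec' {α : Type*} [Fintype α] (M : α → Matrix (Fin D) (Fin D) ℂ) (x : Fin D → ℂ) :
    (∑ a, M a) *ᵥ x = ∑ a, M a *ᵥ x := by
  ext i
  simp only [mulVec, dotProduct, Matrix.sum_apply, Finset.sum_apply, Finset.sum_mul]
  exact Finset.sum_comm

lemma vecMulVec_mulVec' (u v y : Fin D → ℂ) :
    vecMulVec u v *ᵥ y = (v ⬝ᵥ y) • u := by
  ext i
  simp only [mulVec, dotProduct, vecMulVec_apply, Pi.smul_apply, smul_eq_mul, Finset.sum_mul]
  exact Finset.sum_congr rfl fun j _ => by ring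

lemma vecSpan_mono (A : ι → Matrix (Fin D) (Fin D) ℂ) {n : ℕ} {φ : Fin D → ℂ}
    {k : ι} {μ : ℂ} (hμ : μ ≠ 0) (heig : A k *ᵥ φ = μ • φ) :
    krausVecSpan A n φ ≤ krausVecSpan A (n + 1) φ := by
  rw [krausVecSpan, Submodule.span_le]
  rintro v ⟨w, rfl⟩
  have h1 : wordProd A (Fin.snoc w k) *ᵥ φ = μ • (wordProd A w *ᵥ φ) := by
    rw [wordProd_snoc, ← mulVec_mulVec, heig, mulVec_smul]
  have h2 : wordProd A (Fin.snoc w k) *ᵥ φ ∈ krausVecSpan A (n + 1) φ :=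
    Submodule.subset_span ⟨Fin.snoc w k, rfl⟩
  have := (krausVecSpan A (n + 1) φ).smul_mem μ⁻¹ h2
  rwa [h1, smul_smul, inv_mul_cancel₀ hμ, one_smul] at this

lemma vecSpan_succ (A : ι → Matrix (Fin D) (Fin D) ℂ) (n : ℕ) (φ : Fin D → ℂ) :
    krausVecSpan A (n + 1) φ
      = ⨆ j, (krausVecSpan A n φ).map (Matrix.mulVecLin (A j)) := by
  have hset : {v | ∃ w : Fin (n + 1) → ι, v = wordProd A w *ᵥ φ}
      = ⋃ j, (Matrix.mulVecLin (A j)) '' {v | ∃ w : Fin n → ι, v = wordProd A w *ᵥ φ} := by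
    ext v
    constructor
    · rintro ⟨w, rfl⟩
      refine Set.mem_iUnion.2 ⟨w 0, ⟨wordProd A (Fin.tail w) *ᵥ φ, ⟨_, rfl⟩, ?_⟩⟩
      rw [mulVecLin_apply, mulVec_mulVec, ← wordProd_cons, Fin.cons_self_tail]
    · intro hv
      rw [Set.mem_iUnion] at hv
      obtain ⟨j, x, ⟨w, rfl⟩, rfl⟩ := hv
      exact ⟨Fin.cons j w, by rw [mulVecLin_apply, mulVec_mulVec, wordProd_cons]⟩
  rw [krausVecSpan, hset, Submodule.span_iUnion]
  exact iSup_congr fun j => by rw [krausVecSpan, Submodule.span_image]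

lemma krausMap_iterate (A : ι → Matrix (Fin D) (Fin D) ℂ) (n : ℕ)
    (X : Matrix (Fin D) (Fin D) ℂ) :
    (krausMap A)^[n] X = ∑ w : Fin n → ι, wordProd A w * X * (wordProd A w)ᴴ := by
  induction n with
  | zero => simp [wordProd]
  | succ n ih =>
    rw [Function.iterate_succ_apply', ih, krausMap]
    have key : ∀ (j : ι) (w : Fin n → ι),
        A j * (wordProd A w * X * (wordProd A w)ᴴ) * (A j)ᴴ
          = wordProd A (Fin.cons j w) * X * (wordProd A (Fin.cons j w))ᴴ := by
      intro j w
      rw [wordProd_cons, conjTranspose_mul]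
      simp [Matrix.mul_assoc]
    calc (∑ j, A j * (∑ w : Fin n → ι, wordProd A w * X * (wordProd A w)ᴴ) * (A j)ᴴ)
        = ∑ p : ι × (Fin n → ι),
            wordProd A (Fin.cons p.1 p.2) * X * (wordProd A (Fin.cons p.1 p.2))ᴴ := by
          rw [Fintype.sum_prod_type]
          exact Finset.sum_congr rfl fun j _ => by
            rw [Finset.mul_sum, Finset.sum_mul]
            exact Finset.sum_congr rfl fun w _ => key j w
      _ = ∑ w : Fin (n + 1) → ι, wordProd A w * X * (wordProd A w)ᴴ :=
          Fintype.sum_equiv (Fin.consEquiv (fun _ : Fin (n + 1) => ι)) _ _ (fun p => rfl)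

lemma vecSpan_top_of_posDef (A : ι → Matrix (Fin D) (Fin D) ℂ) (n : ℕ) (φ : Fin D → ℂ)
    (h : ((krausMap A)^[n] (vecMulVec φ (star φ))).PosDef) :
    krausVecSpan A n φ = ⊤ := by
  set M := (krausMap A)^[n] (vecMulVec φ (star φ)) with hM
  have hmem : ∀ x, M *ᵥ x ∈ krausVecSpan A n φ := by
    intro x
    rw [hM, krausMap_iterate, sum_mulVec']
    refine Submodule.sum_mem _ fun w _ => ?_
    have : (wordProd A w * vecMulVec φ (star φ) * (wordProd A w)ᴴ) *ᵥ x
        = (star φ ⬝ᵥ ((wordProd A w)ᴴ *ᵥ x)) • (wordProd A w *ᵥ φ) := by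
      rw [← mulVec_mulVec, ← mulVec_mulVec, vecMulVec_mulVec', mulVec_smul]
    rw [this]
    exact Submodule.smul_mem _ _ (Submodule.subset_span ⟨w, rfl⟩)
  have hsurj : Function.Surjective (M.mulVec) :=
    Matrix.mulVec_surjective_iff_isUnit.mpr h.isUnit
  rw [eq_top_iff]
  intro x _
  obtain ⟨y, hy⟩ := hsurj x
  exact hy ▸ hmem y

theorem stmt14 (D : ℕ) {ι : Type*} [Fintype ι]
    (A : ι → Matrix (Fin D) (Fin D) ℂ) (hTP : TracePreserving A)
    (hprim : Primitive A) (k : ι) (φ : Fin D → ℂ) (hφ : φ ≠ 0)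
    (μ : ℂ) (hμ : μ ≠ 0) (heig : A k *ᵥ φ = μ • φ) :
    krausVecSpan A (D - 1) φ = ⊤ := by
  rcases Nat.eq_zero_or_pos D with hD | hD
  · subst hD
    exact absurd (Subsingleton.elim φ 0) hφ
  obtain ⟨N, hN⟩ := hprim
  have hNtop : krausVecSpan A N φ = ⊤ := vecSpan_top_of_posDef A N φ (hN φ hφ)
  have hmono : ∀ n, krausVecSpan A n φ ≤ krausVecSpan A (n + 1) φ :=
    fun n => vecSpan_mono A hμ heig
  have hmono' : ∀ m n, m ≤ n → krausVecSpan A m φ ≤ krausVecSpan A n φ := by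
    intro m n h
    induction n, h using Nat.le_induction with
    | base => exact le_refl _
    | succ n h ih => exact ih.trans (hmono n)
  have hstab : ∀ m, krausVecSpan A m φ = krausVecSpan A (m + 1) φ →
      ∀ l, krausVecSpan A (m + l) φ = krausVecSpan A m φ := by
    intro m hm l
    induction l with
    | zero => rfl
    | succ l ih =>
      have : krausVecSpan A (m + l + 1) φ = krausVecSpan A (m + 1) φ := by
        rw [vecSpan_succ, vecSpan_succ, ih]
      rw [show m + (l + 1) = m + l + 1 from rfl, this, ← hm]
  have htop_of_stab : ∀ m, krausVecSpan A m φ = krausVecSpan A (m + 1) φ →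
      krausVecSpan A m φ = ⊤ := by
    intro m hm
    rcases le_total N m with h | h
    · exact top_unique (hNtop ▸ hmono' N m h)
    · obtain ⟨l, rfl⟩ := Nat.exists_eq_add_of_le h
      rw [← hstab m hm l]
      exact hNtop
  have hclaim : ∀ m, krausVecSpan A m φ = ⊤ ∨
      m + 1 ≤ Module.finrank ℂ (krausVecSpan A m φ) := by
    intro m
    induction m with
    | zero =>
      right
      have hφmem : φ ∈ krausVecSpan A 0 φ :=
        Submodule.subset_span ⟨fun i => i.elim0, by simp [wordProd]⟩
      have hne : krausVecSpan A 0 φ ≠ ⊥ := fun h => hφ (by simpa [h] using hφmem)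
      rcases Nat.eq_zero_or_pos (Module.finrank ℂ (krausVecSpan A 0 φ)) with h0 | h0
      · exact absurd (Submodule.finrank_eq_zero.mp h0) hne
      · exact h0
    | succ m ih =>
      rcases ih with h | h
      · left
        exact top_unique (h ▸ hmono m)
      · by_cases he : krausVecSpan A m φ = krausVecSpan A (m + 1) φ
        · left
          exact top_unique ((htop_of_stab m he) ▸ hmono m)
        · right
          have hlt : krausVecSpan A m φ < krausVecSpan A (m + 1) φ :=
            lt_of_le_of_ne (hmono m) he
          have := Submodule.finrank_lt_finrank_of_lt hlt
          omega
  rcases hclaim (D - 1) with h | h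
  · exact h
  · refine Submodule.eq_top_of_finrank_eq ?_
    have h1 : Module.finrank ℂ (krausVecSpan A (D - 1) φ)
        ≤ Module.finrank ℂ (Fin D → ℂ) := Submodule.finrank_le _
    rw [Module.finrank_fin_fun] at h1 ⊢
    omega
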